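/- arXiv:1603.09613 — 2 statements merged into one kernel-verified Lean document; each statement's English description precedes it below -/
import Mathlib

section
/- If G is a bipartite graph, then Q(G) is a Gorenstein Fano polytope: Q(G) is a lattice polytope (all its vertices lie in ℤ^d), the origin is the unique lattice point in the interior of Q(G), and the dual polytope Q(G)^∨ is a lattice polytope. -/
/-! A vertex `v` of `Q(G)` with fractional coordinates can be moved both ways along the direction
that is `±1` on its fractional coordinates, the signs given by a 2-colouring: a tight edge
constraint with one fractional end would force the other end to be fractional too, and on an edge
with both ends fractional the move cancels. A lattice point in the interior has `x_i > -1` and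
`x_i + x_j < 1` along an edge at every `i`, so `x = 0`. Finally `Q(G)` is the polar of the finite
set `V` of the vectors `e_i + e_j` (edges) and `-e_i`, and `0 ∈ conv V`, so by separation
`Q(G)^∨ = conv V`, whose vertices lie in `V`. -/

open Set Pointwise

/-- The fractional stable set polytope `FRAC(G)` of a finite simple graph `G` on `Fin d`. -/
def FRAC (d : ℕ) (G : SimpleGraph (Fin d)) : Set (Fin d → ℝ) :=
  {x | (∀ i, 0 ≤ x i) ∧ ∀ i j, G.Adj i j → x i + x j ≤ 1}

/-- The polytope `Q(G) = 3·FRAC(G) − (1,…,1)`. -/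
def Qpoly (d : ℕ) (G : SimpleGraph (Fin d)) : Set (Fin d → ℝ) :=
  {x | (∀ i, -1 ≤ x i) ∧ ∀ i j, G.Adj i j → x i + x j ≤ 1}

/-- The number of lattice points of a subset of `ℝ^d`. -/
noncomputable def latticePts {d : ℕ} (s : Set (Fin d → ℝ)) : ℕ :=
  (s ∩ {x | ∀ i, ∃ z : ℤ, x i = (z : ℝ)}).ncard

/-- `π : Fin d → ℤ` is a signed permutation word on `[d] = {1,…,d}`:
each letter is one of `±1,…,±d` and the absolute values form a permutation of `1,…,d`. -/
def IsSignedPermWord (d : ℕ) (π : Fin d → ℤ) : Prop :=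
  (∀ p, 1 ≤ (π p).natAbs ∧ (π p).natAbs ≤ d) ∧
    Function.Injective fun p => (π p).natAbs

/-- The number of descents of a signed permutation word: position `i` (0-based) is a
descent if `i` is not the last position and `π i > π (i+1)`, or `i` is the last
position and `π i > 0`. -/
noncomputable def des {d : ℕ} (π : Fin d → ℤ) : ℕ :=
  Set.ncard {i : Fin d |
    (∃ h : (i : ℕ) + 1 < d, π ⟨(i : ℕ) + 1, h⟩ < π i) ∨ ((i : ℕ) + 1 = d ∧ 0 < π i)}

/-- Steingrímsson's set `Π(G)`: signed permutation words such that for every edge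
`(i,j)` of `G`, if the letter `+i` appears then the letter `−j` precedes it.
(Vertex `v : Fin d` corresponds to the letter `v+1`.) -/
def PiSet {d : ℕ} (G : SimpleGraph (Fin d)) : Set (Fin d → ℤ) :=
  {π | IsSignedPermWord d π ∧ ∀ i j : Fin d, G.Adj i j →
    ∀ p : Fin d, π p = ((i : ℕ) + 1 : ℤ) →
      ∃ q : Fin d, q < p ∧ π q = -(((j : ℕ) + 1 : ℤ))}

/-- The dual (polar) of a subset of `ℝ^d`. -/
def polarDual {d : ℕ} (P : Set (Fin d → ℝ)) : Set (Fin d → ℝ) :=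
  {x | ∀ y ∈ P, (∑ i, x i * y i) ≤ 1}

/-- The vertex set `{e_i + e_j : (i,j) ∈ E(G)} ∪ {−e_1,…,−e_d}` of the dual of `Q(G)`. -/
def Vset (d : ℕ) (G : SimpleGraph (Fin d)) : Set (Fin d → ℝ) :=
  {x | ∃ i j, G.Adj i j ∧ x = Pi.single i 1 + Pi.single j 1} ∪
    {x | ∃ i, x = -Pi.single i 1}

/-- The Eulerian number `A(k,i)`: the number of permutations of `{1,…,k}` with
exactly `i` descents. -/
noncomputable def eulerianNumber (k i : ℕ) : ℕ :=
  Set.ncard {σ : Equiv.Perm (Fin k) |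
    Set.ncard {j : Fin k | ∃ h : (j : ℕ) + 1 < k, σ ⟨(j : ℕ) + 1, h⟩ < σ j} = i}

/-- The configuration `A ⊂ ℤ^{d+1}` consisting of `(0,1)`, `(e_i+e_j,1)` for edges
`(i,j)`, and `(−e_i,1)`. -/
def Aset (d : ℕ) (G : SimpleGraph (Fin d)) : Set (Fin (d + 1) → ℤ) :=
  {a | a = Fin.snoc (0 : Fin d → ℤ) (1 : ℤ) ∨
    (∃ i j, G.Adj i j ∧ a = Fin.snoc (Pi.single i 1 + Pi.single j 1) (1 : ℤ)) ∨
    ∃ i, a = Fin.snoc (-Pi.single i 1) (1 : ℤ)}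

open Filter Topology Matrix

section Perturbation

lemma exists_pos_of_eventually_nhds_zero {p : ℝ → Prop} (h : ∀ᶠ t in 𝓝 0, p t) :
    ∃ t > 0, p t := by
  obtain ⟨t, ht, hpos⟩ := ((h.filter_mono nhdsWithin_le_nhds).and self_mem_nhdsWithin).exists
    (f := 𝓝[>] (0 : ℝ))
  exact ⟨t, hpos, ht⟩

variable {E : Type*} [AddCommGroup E] [Module ℝ E]

lemma eq_zero_of_mem_extremePoints_of_eventually_add_smul_mem {S : Set E} {v w : E}
    (hv : v ∈ S.extremePoints ℝ) (h : ∀ᶠ t in 𝓝 (0 : ℝ), v + t • w ∈ S) : w = 0 := by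
  have hneg : ∀ᶠ t in 𝓝 (0 : ℝ), v + (-t) • w ∈ S :=
    (continuous_neg.tendsto' 0 0 neg_zero).eventually h
  obtain ⟨t, ht, hplus, hminus⟩ := exists_pos_of_eventually_nhds_zero (h.and hneg)
  have hmid : v ∈ openSegment ℝ (v + t • w) (v + (-t) • w) :=
    ⟨1 / 2, 1 / 2, by norm_num, by norm_num, by norm_num, by module⟩
  have htw : t • w = 0 := add_eq_left.1 (hv.2 hplus hminus hmid)
  exact (smul_eq_zero.1 htw).resolve_left ht.ne'

variable [TopologicalSpace E] [ContinuousAdd E] [ContinuousSMul ℝ E]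

lemma eventually_add_smul_mem_of_mem_interior {S : Set E} {x : E} (hx : x ∈ interior S) (w : E) :
    ∀ᶠ t in 𝓝 (0 : ℝ), x + t • w ∈ S := by
  have hcont : Continuous fun t : ℝ => x + t • w := by fun_prop
  exact (hcont.tendsto' 0 x (by simp)).eventually (mem_interior_iff_mem_nhds.1 hx)

end Perturbation

lemma eventually_add_mul_le {a b c : ℝ} (hac : a ≤ c) (hb : b ≠ 0 → a ≠ c) :
    ∀ᶠ t in 𝓝 (0 : ℝ), a + t * b ≤ c := by
  by_cases hb0 : b = 0
  · simp [hb0, hac]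
  have hcont : Continuous fun t : ℝ => a + t * b := by fun_prop
  have hlt : ∀ᶠ t in 𝓝 (0 : ℝ), a + t * b < c :=
    (hcont.tendsto' 0 a (by simp)).eventually (eventually_lt_nhds (hac.lt_of_ne (hb hb0)))
  exact hlt.mono fun _ => le_of_lt

section Vertices

variable {V : Type*} {G : SimpleGraph V}

def coloringSign (C : G.Coloring (Fin 2)) (i : V) : ℝ :=
  if C i = 0 then 1 else -1

lemma coloringSign_ne_zero (C : G.Coloring (Fin 2)) (i : V) : coloringSign C i ≠ 0 := by
  unfold coloringSign
  split_ifs <;> norm_num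

lemma coloringSign_add_eq_zero (C : G.Coloring (Fin 2)) {i j : V} (h : G.Adj i j) :
    coloringSign C i + coloringSign C j = 0 := by
  have hne := C.valid h
  unfold coloringSign
  generalize C i = a at *
  generalize C j = b at *
  fin_cases a <;> fin_cases b <;> simp_all

end Vertices

section Qpoly

variable {d : ℕ} {G : SimpleGraph (Fin d)}

lemma eventually_add_smul_indicator_mem_Qpoly {v : Fin d → ℝ} (hv : v ∈ Qpoly d G)
    (C : G.Coloring (Fin 2)) :
    ∀ᶠ t in 𝓝 (0 : ℝ),
      v + t • {k | ¬∃ z : ℤ, v k = z}.indicator (coloringSign C) ∈ Qpoly d G := by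
  set F := {k | ¬∃ z : ℤ, v k = z}
  set σ := F.indicator (coloringSign C)
  have hint : ∀ {k}, k ∉ F → ∃ z : ℤ, v k = z := fun hk => not_not.1 hk
  simp only [Qpoly, Set.mem_ofPred_eq, Pi.add_apply, Pi.smul_apply, smul_eq_mul, eventually_and,
    eventually_all]
  constructor
  · intro k
    refine (eventually_add_mul_le (a := -v k) (b := -σ k) (c := 1) (by linarith [hv.1 k]) ?_).mono
      fun t ht => by linarith
    intro hσk hvk
    have hk : k ∈ F := Set.mem_of_indicator_ne_zero (neg_ne_zero.1 hσk)
    exact hk ⟨-1, by push_cast; linarith⟩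
  · intro k l hkl
    refine (eventually_add_mul_le (b := σ k + σ l) (hv.2 k l hkl) ?_).mono fun t ht => by linarith
    intro hσ hsum
    by_cases hk : k ∈ F <;> by_cases hl : l ∈ F
    · simp only [σ, Set.indicator_of_mem hk, Set.indicator_of_mem hl] at hσ
      exact hσ (coloringSign_add_eq_zero C hkl)
    · obtain ⟨z, hz⟩ := hint hl
      exact hk ⟨1 - z, by push_cast; linarith⟩
    · obtain ⟨z, hz⟩ := hint hk
      exact hl ⟨1 - z, by push_cast; linarith⟩
    · simp [σ, hk, hl] at hσ

lemma exists_int_eq_of_mem_extremePoints_Qpoly (hbip : G.Colorable 2) {v : Fin d → ℝ}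
    (hv : v ∈ (Qpoly d G).extremePoints ℝ) (i : Fin d) : ∃ z : ℤ, v i = z := by
  obtain ⟨C⟩ := hbip
  have hσ := eq_zero_of_mem_extremePoints_of_eventually_add_smul_mem hv
    (eventually_add_smul_indicator_mem_Qpoly hv.1 C)
  by_contra hi
  have := congrFun hσ i
  rw [Set.indicator_of_mem hi] at this
  exact coloringSign_ne_zero C i this

lemma lt_of_mem_interior_Qpoly {x : Fin d → ℝ} (hx : x ∈ interior (Qpoly d G)) :
    (∀ i, -1 < x i) ∧ ∀ i j, G.Adj i j → x i + x j < 1 := by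
  constructor
  · intro i
    obtain ⟨t, ht, hmem⟩ := exists_pos_of_eventually_nhds_zero
      (eventually_add_smul_mem_of_mem_interior hx (-Pi.single i 1))
    have := hmem.1 i
    simp only [Pi.add_apply, Pi.smul_apply, Pi.neg_apply, Pi.single_eq_same, smul_eq_mul] at this
    linarith
  · intro i j hij
    obtain ⟨t, ht, hmem⟩ := exists_pos_of_eventually_nhds_zero
      (eventually_add_smul_mem_of_mem_interior hx (Pi.single i 1))
    have := hmem.2 i j hij
    simp only [Pi.add_apply, Pi.smul_apply, Pi.single_eq_same, Pi.single_eq_of_ne hij.ne',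
      smul_eq_mul] at this
    linarith

lemma zero_mem_interior_Qpoly : (0 : Fin d → ℝ) ∈ interior (Qpoly d G) := by
  refine mem_interior.2 ⟨Metric.ball 0 (1 / 2), fun x hx => ?_, Metric.isOpen_ball,
    Metric.mem_ball_self (by norm_num)⟩
  have hxi : ∀ i, |x i| < 1 / 2 :=
    (pi_norm_lt_iff (by norm_num)).1 (mem_ball_zero_iff.1 hx)
  exact ⟨fun i => by linarith [(abs_lt.1 (hxi i)).1],
    fun i j _ => by linarith [(abs_lt.1 (hxi i)).2, (abs_lt.1 (hxi j)).2]⟩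

lemma interior_Qpoly_inter_lattice_eq_zero (hiso : ∀ i : Fin d, ∃ j, G.Adj i j) :
    interior (Qpoly d G) ∩ {x : Fin d → ℝ | ∀ i, ∃ z : ℤ, x i = z} = {0} := by
  refine Set.eq_singleton_iff_unique_mem.2
    ⟨⟨zero_mem_interior_Qpoly, fun _ => ⟨0, by simp⟩⟩, fun x ⟨hx, hlat⟩ => funext fun i => ?_⟩
  obtain ⟨hvert, hedge⟩ := lt_of_mem_interior_Qpoly hx
  obtain ⟨j, hij⟩ := hiso i
  obtain ⟨z, hz⟩ := hlat i
  obtain ⟨w, hw⟩ := hlat j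
  have hz' : -1 < z := by exact_mod_cast hz ▸ hvert i
  have hw' : -1 < w := by exact_mod_cast hw ▸ hvert j
  have hzw : z + w < 1 := by exact_mod_cast hz ▸ hw ▸ hedge i j hij
  rw [hz, Pi.zero_apply, Int.cast_eq_zero]
  omega

end Qpoly

section PolarDual

variable {d : ℕ}

lemma mem_polarDual_iff {P : Set (Fin d → ℝ)} {x : Fin d → ℝ} :
    x ∈ polarDual P ↔ ∀ y ∈ P, x ⬝ᵥ y ≤ 1 :=
  Iff.rfl

lemma convex_polarDual (P : Set (Fin d → ℝ)) : Convex ℝ (polarDual P) := by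
  intro x hx y hy a b ha hb hab z hz
  calc (a • x + b • y) ⬝ᵥ z = a * (x ⬝ᵥ z) + b * (y ⬝ᵥ z) := by
        rw [add_dotProduct, smul_dotProduct, smul_dotProduct, smul_eq_mul, smul_eq_mul]
    _ ≤ a * 1 + b * 1 := by gcongr; exacts [hx z hz, hy z hz]
    _ = 1 := by rw [mul_one, mul_one, hab]

lemma subset_polarDual_polarDual (P : Set (Fin d → ℝ)) : P ⊆ polarDual (polarDual P) :=
  fun x hx => mem_polarDual_iff.2 fun y hy => dotProduct_comm y x ▸ hy x hx

lemma polarDual_polarDual_subset_convexHull {V : Set (Fin d → ℝ)} (hV : V.Finite)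
    (h0 : 0 ∈ convexHull ℝ V) : polarDual (polarDual V) ⊆ convexHull ℝ V := by
  intro x hx
  by_contra hxV
  obtain ⟨f, u, hfV, hfx⟩ := geometric_hahn_banach_closed_point (convex_convexHull ℝ V)
    (hV.isCompact_convexHull (𝕜 := ℝ)).isClosed hxV
  have hu : 0 < u := by simpa using hfV 0 h0
  -- `0 ∈ conv V` makes `u` positive, so `f / u` is a point of the polar of `V`
  set g : Fin d → ℝ := fun i => f (fun j => if i = j then 1 else 0) / u
  have hfg : ∀ y, y ⬝ᵥ g = f y / u := fun y => by
    rw [← ContinuousLinearMap.coe_coe, LinearMap.pi_apply_eq_sum_univ, Finset.sum_div]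
    exact Finset.sum_congr rfl fun i _ => (mul_div_assoc _ _ _).symm
  have hg : g ∈ polarDual V := mem_polarDual_iff.2 fun y hy => by
    rw [dotProduct_comm, hfg, div_le_one hu]
    exact (hfV y (subset_convexHull ℝ V hy)).le
  have hxg : x ⬝ᵥ g ≤ 1 := hx g hg
  rw [hfg, div_le_one hu] at hxg
  exact hxg.not_gt hfx

lemma polarDual_polarDual_eq_convexHull {V : Set (Fin d → ℝ)} (hV : V.Finite)
    (h0 : 0 ∈ convexHull ℝ V) : polarDual (polarDual V) = convexHull ℝ V :=
  (polarDual_polarDual_subset_convexHull hV h0).antisymm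
    (convexHull_min (subset_polarDual_polarDual V) (convex_polarDual _))

end PolarDual

section Vset

variable {d : ℕ} {G : SimpleGraph (Fin d)}

lemma Qpoly_eq_polarDual_Vset : Qpoly d G = polarDual (Vset d G) := by
  have hpair : ∀ i j (y : Fin d → ℝ), y ⬝ᵥ (Pi.single i 1 + Pi.single j 1) = y i + y j := by
    simp [dotProduct_add, dotProduct_single]
  have hneg : ∀ i (y : Fin d → ℝ), y ⬝ᵥ (-Pi.single i 1) = -y i := by
    simp [dotProduct_neg, dotProduct_single]
  ext y
  rw [mem_polarDual_iff]
  constructor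
  · rintro ⟨hvert, hedge⟩ x (⟨i, j, hij, rfl⟩ | ⟨i, rfl⟩)
    · exact (hpair i j y).symm ▸ hedge i j hij
    · exact (hneg i y).symm ▸ (by linarith [hvert i])
  · intro hy
    refine ⟨fun i => ?_, fun i j hij => ?_⟩
    · have := hneg i y ▸ hy _ (Or.inr ⟨i, rfl⟩)
      linarith
    · exact hpair i j y ▸ hy _ (Or.inl ⟨i, j, hij, rfl⟩)

lemma Vset_finite : (Vset d G).Finite := by
  refine Set.Finite.union ((Set.finite_range fun p : Fin d × Fin d =>
    (Pi.single p.1 1 + Pi.single p.2 1 : Fin d → ℝ)).subset ?_)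
    ((Set.finite_range fun i : Fin d => (-Pi.single i 1 : Fin d → ℝ)).subset ?_)
  · rintro x ⟨i, j, _, rfl⟩
    exact ⟨(i, j), rfl⟩
  · rintro x ⟨i, rfl⟩
    exact ⟨i, rfl⟩

lemma zero_mem_convexHull_Vset {i j : Fin d} (hij : G.Adj i j) :
    (0 : Fin d → ℝ) ∈ convexHull ℝ (Vset d G) := by
  set z : Fin 3 → Fin d → ℝ := ![Pi.single i 1 + Pi.single j 1, -Pi.single i 1, -Pi.single j 1]
  have hz : (0 : Fin d → ℝ) = ∑ k, (1 / 3 : ℝ) • z k := by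
    simp only [Fin.sum_univ_three, z, Matrix.cons_val_zero, Matrix.cons_val_one,
      Matrix.cons_val_two, Matrix.head_cons, Matrix.tail_cons]
    module
  rw [hz]
  refine (convex_convexHull ℝ _).sum_mem (fun _ _ => by norm_num) (by norm_num)
    fun k _ => subset_convexHull ℝ _ ?_
  fin_cases k
  exacts [Or.inl ⟨i, j, hij, rfl⟩, Or.inr ⟨i, rfl⟩, Or.inr ⟨j, rfl⟩]

lemma exists_int_eq_of_mem_Vset {x : Fin d → ℝ} (hx : x ∈ Vset d G) (k : Fin d) :
    ∃ z : ℤ, x k = z := by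
  rcases hx with ⟨i, j, _, rfl⟩ | ⟨i, rfl⟩
  · exact ⟨(if k = i then 1 else 0) + (if k = j then 1 else 0), by
      simp only [Pi.add_apply, Pi.single_apply]; split_ifs <;> norm_num⟩
  · exact ⟨-(if k = i then 1 else 0), by
      simp only [Pi.neg_apply, Pi.single_apply]; split_ifs <;> norm_num⟩

end Vset

theorem stmt8_general (d : ℕ) (G : SimpleGraph (Fin d))
    (hiso : ∀ i : Fin d, ∃ j, G.Adj i j) (hbip : G.Colorable 2) :
    (∀ v ∈ Set.extremePoints ℝ (Qpoly d G), ∀ i, ∃ z : ℤ, v i = (z : ℝ)) ∧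
    interior (Qpoly d G) ∩ {x : Fin d → ℝ | ∀ i, ∃ z : ℤ, x i = (z : ℝ)} = {0} ∧
    ∀ v ∈ Set.extremePoints ℝ (polarDual (Qpoly d G)), ∀ i, ∃ z : ℤ, v i = (z : ℝ) := by
  refine ⟨fun v hv => exists_int_eq_of_mem_extremePoints_Qpoly hbip hv,
    interior_Qpoly_inter_lattice_eq_zero hiso, fun v hv i => ?_⟩
  obtain ⟨j, hij⟩ := hiso i
  rw [Qpoly_eq_polarDual_Vset,
    polarDual_polarDual_eq_convexHull Vset_finite (zero_mem_convexHull_Vset hij)] at hv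
  exact exists_int_eq_of_mem_Vset (extremePoints_convexHull_subset hv) i

/-- if `G` is bipartite then `Q(G)` is a Gorenstein Fano polytope:
`Q(G)` is a lattice polytope, the origin is the unique interior lattice point,
and the dual polytope is a lattice polytope. -/
theorem stmt8 (d : ℕ) (hd : 1 ≤ d) (G : SimpleGraph (Fin d))
    (hiso : ∀ i : Fin d, ∃ j, G.Adj i j) (hbip : G.Colorable 2) :
    (∀ v ∈ Set.extremePoints ℝ (Qpoly d G), ∀ i, ∃ z : ℤ, v i = (z : ℝ)) ∧
    interior (Qpoly d G) ∩ {x : Fin d → ℝ | ∀ i, ∃ z : ℤ, x i = (z : ℝ)} = {0} ∧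
    ∀ v ∈ Set.extremePoints ℝ (polarDual (Qpoly d G)), ∀ i, ∃ z : ℤ, v i = (z : ℝ) :=
  stmt8_general d G hiso hbip
end

section
/- Let D = conv({e_i + e_j : (i,j) ∈ E(G)} ∪ {−e_1, …, −e_d}) ⊆ ℝ^d (which equals the dual polytope Q(G)^∨). Then D is a Gorenstein Fano polytope — that is, the dual polytope D^∨ is a lattice polytope — if and only if G is bipartite. -/
/-
The polar of `conv V` is `Q(G)`. If `G` is properly coloured by two colours, push the
non-integral coordinates of a point `v` of `Q(G)` by `+t` on one colour class and `-t` on the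
other. No constraint tight at `v` moves: `x_i ≥ -1` is never tight at a non-integral coordinate,
and a tight edge with one non-integral endpoint has both endpoints non-integral and of different
colours. So `v` is the midpoint of a short segment in `Q(G)`, and is not a vertex unless it is
integral.

If `G` has an odd closed walk through `u`, let `x` be `1/2` on the component of `u` and `-1`
elsewhere. A point of `Q(G)` making the same constraints tight satisfies `y_i + y_j = 1` along
every edge of that component, so `y - 1/2` changes sign at each step of the odd walk and
vanishes on the component; hence `x` is a vertex of `Q(G)` with a non-integral coordinate.
-/

open Set Pointwise

open Filter Topology SimpleGraph

lemma polarDual_convexHull {d : ℕ} (S : Set (Fin d → ℝ)) :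
    polarDual (convexHull ℝ S) = polarDual S := by
  refine Set.Subset.antisymm (fun x hx y hy => hx y (subset_convexHull ℝ S hy))
    fun x hx => convexHull_min hx ?_
  exact convex_halfSpace_le (dotProductBilin ℝ ℝ x).isLinear 1

lemma polarDual_Vset {d : ℕ} (G : SimpleGraph (Fin d)) : polarDual (Vset d G) = Qpoly d G := by
  ext x
  simp only [polarDual, Vset, Qpoly, ← dotProduct.eq_1]
  simp [or_imp, forall_and, neg_le, and_comm, @forall_comm (Fin d → ℝ), dotProduct_add]

section ExtremePoints

variable {E : Type*} [AddCommGroup E] [Module ℝ E]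

lemma eq_zero_of_mem_extremePoints_of_eventually_add_smul_mem_s15 {A : Set E} {x s : E}
    (hx : x ∈ A.extremePoints ℝ) (h : ∀ᶠ t in 𝓝 (0 : ℝ), x + t • s ∈ A) : s = 0 := by
  obtain ⟨ε, hε, hball⟩ := Metric.eventually_nhds_iff.1 h
  have hmem : ∀ t : ℝ, |t| < ε → x + t • s ∈ A := fun t ht =>
    hball (by rwa [Real.dist_eq, sub_zero])
  have hseg : x ∈ openSegment ℝ (x + (ε / 2) • s) (x + (-(ε / 2)) • s) :=
    ⟨1 / 2, 1 / 2, by norm_num, by norm_num, by norm_num, by module⟩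
  have hfix := hx.2 (hmem _ (by rw [abs_of_pos (half_pos hε)]; linarith))
    (hmem _ (by rw [abs_neg, abs_of_pos (half_pos hε)]; linarith)) hseg
  simpa [hε.ne'] using hfix

lemma LinearMap.eq_of_mem_openSegment_of_le (f : E →ₗ[ℝ] ℝ) {x y z : E} {c : ℝ}
    (hx : x ∈ openSegment ℝ y z) (hy : f y ≤ c) (hz : f z ≤ c) (hfx : f x = c) : f y = c := by
  obtain ⟨a, b, ha, hb, hab, rfl⟩ := hx
  simp only [map_add, map_smul, smul_eq_mul] at hfx
  refine le_antisymm hy (not_lt.1 fun hlt => ?_)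
  have hc : c = a * c + b * c := by rw [← add_mul, hab, one_mul]
  nlinarith [mul_pos ha (sub_pos.2 hlt), mul_nonneg hb.le (sub_nonneg.2 hz)]

end ExtremePoints

section OddLoop

variable {V : Type*} {G : SimpleGraph V} {u : V}

lemma SimpleGraph.Walk.sub_half_eq_neg_one_pow_mul {w : V → ℝ}
    (hw : ∀ i j, G.Adj i j → G.Reachable u i → w i + w j = 1) {a b : V} (p : G.Walk a b)
    (ha : G.Reachable u a) : w b - 1 / 2 = (-1) ^ p.length * (w a - 1 / 2) := by
  induction p with
  | nil => simp
  | @cons a c b hac q ih =>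
    rw [Walk.length_cons, pow_succ]
    linear_combination ih (ha.trans hac.reachable) + (-1) ^ q.length * hw a c hac ha

lemma eq_half_of_odd_loop {w : V → ℝ} (p : G.Walk u u) (hodd : Odd p.length)
    (hw : ∀ i j, G.Adj i j → G.Reachable u i → w i + w j = 1) {i : V} (hi : G.Reachable u i) :
    w i = 1 / 2 := by
  have hu := p.sub_half_eq_neg_one_pow_mul hw .rfl
  rw [hodd.neg_one_pow] at hu
  obtain ⟨q⟩ := hi
  have hq := q.sub_half_eq_neg_one_pow_mul hw .rfl
  rw [show w u - 1 / 2 = 0 by linarith, mul_zero] at hq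
  linarith

end OddLoop

lemma mem_extremePoints_Qpoly_of_odd_loop {d : ℕ} {G : SimpleGraph (Fin d)} {u : Fin d}
    (p : G.Walk u u) (hodd : Odd p.length) :
    ∃ x ∈ (Qpoly d G).extremePoints ℝ, x u = 1 / 2 := by
  classical
  let x : Fin d → ℝ := fun i => if G.Reachable u i then 1 / 2 else -1
  have hxQ : x ∈ Qpoly d G := by
    refine ⟨fun i => ?_, fun i j hij => ?_⟩
    · simp only [x]; split_ifs <;> norm_num
    · by_cases hi : G.Reachable u i
      · simp [x, hi, hi.trans hij.reachable]; norm_num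
      · have hj : ¬G.Reachable u j := fun h => hi (h.trans hij.symm.reachable)
        simp [x, hi, hj]; norm_num
  refine ⟨x, ⟨hxQ, fun y hy z hz hseg => funext fun i => ?_⟩, by simp [x]⟩
  let ev (i : Fin d) : (Fin d → ℝ) →ₗ[ℝ] ℝ := LinearMap.proj i
  by_cases hi : G.Reachable u i
  · rw [eq_half_of_odd_loop (w := y) p hodd (fun j k hjk hj => ?_) hi]
    · simp [x, hi]
    have hk := hj.trans hjk.reachable
    have hxjk : x j + x k = 1 := by simp [x, hj, hk]; norm_num
    exact (ev j + ev k).eq_of_mem_openSegment_of_le hseg (hy.2 j k hjk) (hz.2 j k hjk) hxjk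
  · have hxi : -x i = 1 := by simp [x, hi]
    have hyi : -y i = 1 :=
      (-ev i).eq_of_mem_openSegment_of_le hseg (neg_le.1 (hy.1 i)) (neg_le.1 (hz.1 i)) hxi
    simp only [x, hi, if_false]
    linarith

lemma eventually_add_smul_mem_Qpoly {d : ℕ} {G : SimpleGraph (Fin d)} {v s : Fin d → ℝ}
    (hv : v ∈ Qpoly d G) (hs : ∀ i, s i = 0 ∨ -1 < v i)
    (hst : ∀ i j, G.Adj i j → s i + s j = 0 ∨ v i + v j < 1) :
    ∀ᶠ t in 𝓝 (0 : ℝ), v + t • s ∈ Qpoly d G := by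
  have hlim (a b : ℝ) : Tendsto (fun t : ℝ => a + t * b) (𝓝 0) (𝓝 a) := by
    simpa using ((tendsto_id (x := 𝓝 (0 : ℝ))).mul_const b).const_add a
  simp only [Qpoly, Set.mem_ofPred_eq, Pi.add_apply, Pi.smul_apply, smul_eq_mul,
    eventually_and, eventually_all]
  refine ⟨fun i => ?_, fun i j hij => ?_⟩
  · rcases hs i with h | h
    · simp [h, hv.1 i]
    · exact ((hlim _ _).eventually_const_lt h).mono fun _ => le_of_lt
  · have hsum (t : ℝ) : v i + t * s i + (v j + t * s j) = v i + v j + t * (s i + s j) := by ring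
    simp only [hsum]
    rcases hst i j hij with h | h
    · simp [h, hv.2 i j hij]
    · exact ((hlim _ _).eventually_lt_const h).mono fun _ => le_of_lt

lemma isInt_of_mem_extremePoints_Qpoly {d : ℕ} {G : SimpleGraph (Fin d)} (c : G.Coloring Bool)
    {v : Fin d → ℝ} (hv : v ∈ (Qpoly d G).extremePoints ℝ) :
    ∀ i, ∃ z : ℤ, v i = z := by
  classical
  obtain ⟨hlow, hedge⟩ := hv.1
  let s : Fin d → ℝ := fun i => if ∃ z : ℤ, v i = z then 0 else if c i then 1 else -1
  have hs : ∀ i, s i = 0 ∨ -1 < v i := by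
    intro i
    by_cases hi : ∃ z : ℤ, v i = z
    · simp [s, hi]
    · exact Or.inr ((hlow i).lt_of_ne fun h => hi ⟨-1, by simp [h]⟩)
  have hst : ∀ i j, G.Adj i j → s i + s j = 0 ∨ v i + v j < 1 := by
    intro i j hij
    by_cases hi : ∃ z : ℤ, v i = z <;> by_cases hj : ∃ z : ℤ, v j = z
    · simp [s, hi, hj]
    · obtain ⟨z, hz⟩ := hi
      exact Or.inr ((hedge i j hij).lt_of_ne fun h => hj ⟨1 - z, by push_cast; linarith⟩)
    · obtain ⟨z, hz⟩ := hj
      exact Or.inr ((hedge i j hij).lt_of_ne fun h => hi ⟨1 - z, by push_cast; linarith⟩)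
    · have hcol := c.valid hij
      simp only [s, if_neg hi, if_neg hj]
      revert hcol
      cases c i <;> cases c j <;> norm_num
  have hs0 := eq_zero_of_mem_extremePoints_of_eventually_add_smul_mem_s15 hv
    (eventually_add_smul_mem_Qpoly hv.1 hs hst)
  intro i
  by_contra hi
  have := congrFun hs0 i
  cases hc : c i <;> simp [s, hi, hc] at this

theorem stmt15_general (d : ℕ) (G : SimpleGraph (Fin d)) :
    (∀ v ∈ Set.extremePoints ℝ (polarDual (convexHull ℝ (Vset d G))),
      ∀ i, ∃ z : ℤ, v i = (z : ℝ)) ↔ G.Colorable 2 := by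
  rw [polarDual_convexHull, polarDual_Vset]
  refine ⟨fun hint => ?_, fun ⟨c⟩ v hv =>
    isInt_of_mem_extremePoints_Qpoly (G.recolorOfEquiv finTwoEquiv c) hv⟩
  refine two_colorable_iff_forall_loop_even.2 fun u p => Nat.not_odd_iff_even.1 fun hodd => ?_
  obtain ⟨x, hx, hxu⟩ := mem_extremePoints_Qpoly_of_odd_loop p hodd
  obtain ⟨z, hz⟩ := hint x hx u
  have h2z : 2 * z = 1 := by exact_mod_cast (by linarith : (2 * z : ℝ) = 1)
  omega

/-- `D = conv({e_i+e_j : (i,j) ∈ E(G)} ∪ {−e_i})` is Gorenstein Fano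
(i.e. its dual is a lattice polytope) iff `G` is bipartite. -/
theorem stmt15 (d : ℕ) (hd : 1 ≤ d) (G : SimpleGraph (Fin d))
    (hiso : ∀ i : Fin d, ∃ j, G.Adj i j) :
    (∀ v ∈ Set.extremePoints ℝ (polarDual (convexHull ℝ (Vset d G))),
      ∀ i, ∃ z : ℤ, v i = (z : ℝ)) ↔ G.Colorable 2 :=
  stmt15_general d G
end
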